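/- Let Δ be a Jordan derivation of R = R_n(K,J) (n ≥ 4, K 2-torsion free) such that for each i the i-th column and the (i+1,1) entry of Δ(e_{i+1,i}) vanish. Then Δ(e_{2,1}) = 0, Δ(e_{n,n−1}) = 0, Δ(e_{i+1,i}) = Δ^{i+1,i}_{n,1}(1) e_{n,1} for 1 < i < n−1, and Δ(e_{i,j}) = 0 whenever i − j > 1. -/

import Mathlib

/-!
Write `D_c = Δ(e_{c+1,c})`. If `xy + yx = 0`, the Jordan identity reads
`Δx·y + y·Δx + x·Δy + Δy·x = 0`, which for matrix units `x, y` is a relation between single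
entries of `Δx` and `Δy`. Applied to `x = y = e_{c+1,c}`, to `e_{c+1,c}` and `e_{b+1,b}` with
`|b - c| ≥ 2`, and to `e_{c+2,c}` (whose image comes from
`e_{c+2,c} = e_{c+2,c+1}e_{c+1,c} + e_{c+1,c}e_{c+2,c+1}`) against `e_{c+1,c}` and
`e_{c+2,c+1}`, and cancelling factors 2, these relations kill every entry of `D_c` except the
bottom-left one; the diagonal is reached by propagating `D_c(b+1,b+1) = -D_c(b,b)` away from
`c`. For `r > c + 1`, `e_{r,c} = e_{r,r-1}e_{r-1,c} + e_{r-1,c}e_{r,r-1}`, and these units kill a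
matrix supported in the corner `(n,1)` from both sides, so `Δ(e_{r,c}) = 0` by induction on `r`.
-/

open Matrix

/-- `R_n(K,J)`: the non-unital subring of `n × n` matrices over `K` whose entries on and
above the main diagonal lie in the two-sided ideal `J`. -/
def Rset (n : ℕ) (K : Type) [Ring K] (J : TwoSidedIdeal K) :
    NonUnitalSubring (Matrix (Fin n) (Fin n) K) where
  carrier := {M | ∀ i j : Fin n, i ≤ j → M i j ∈ J}
  zero_mem' := by intro i j _; simp [J.zero_mem]
  add_mem' := by intro a b ha hb i j h; exact J.add_mem (ha i j h) (hb i j h)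
  neg_mem' := by intro a ha i j h; exact J.neg_mem (ha i j h)
  mul_mem' := by
    intro a b ha hb i j h
    show (∑ k, a i k * b k j) ∈ J
    refine J.finsetSum_mem _ _ fun k _ => ?_
    rcases le_or_gt i k with hik | hik
    · exact J.mul_mem_right _ _ (ha i k hik)
    · exact J.mul_mem_left _ _ (hb k j (le_trans hik.le h))

lemma stdBasis_mem {n : ℕ} {K : Type} [Ring K] {J : TwoSidedIdeal K}
    {i j : Fin n} {y : K} (h : i ≤ j → y ∈ J) :
    Matrix.single i j y ∈ Rset n K J := by
  intro a b hab
  rw [Matrix.single]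
  by_cases hc : i = a ∧ j = b
  · obtain ⟨rfl, rfl⟩ := hc
    simpa using h hab
  · simp [Matrix.of_apply, if_neg hc, J.zero_mem]

lemma stdBasis_mem_lower {n : ℕ} {K : Type} [Ring K] {J : TwoSidedIdeal K}
    {i j : Fin n} (h : j < i) (y : K) :
    Matrix.single i j y ∈ Rset n K J :=
  stdBasis_mem fun hle => absurd hle (not_le.mpr h)

section NatIndexed

variable {n : ℕ} {K : Type} [Ring K]

-- Entries and matrix units are indexed by `ℕ` (0-based, zero outside `[0, n)`), so that index
-- arithmetic needs no bound proofs.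
def natEntry (M : Matrix (Fin n) (Fin n) K) (s t : ℕ) : K :=
  if h : s < n ∧ t < n then M ⟨s, h.1⟩ ⟨t, h.2⟩ else 0

def natSingle (i j : ℕ) : Matrix (Fin n) (Fin n) K :=
  if h : i < n ∧ j < n then single ⟨i, h.1⟩ ⟨j, h.2⟩ 1 else 0

lemma natEntry_of_lt (M : Matrix (Fin n) (Fin n) K) {s t : ℕ} (hs : s < n) (ht : t < n) :
    natEntry M s t = M ⟨s, hs⟩ ⟨t, ht⟩ :=
  dif_pos ⟨hs, ht⟩

lemma natEntry_of_le {M : Matrix (Fin n) (Fin n) K} {s t : ℕ} (h : n ≤ s ∨ n ≤ t) :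
    natEntry M s t = 0 :=
  dif_neg (by omega)

lemma natEntry_zero (s t : ℕ) : natEntry (0 : Matrix (Fin n) (Fin n) K) s t = 0 := by
  simp [natEntry]

lemma natEntry_add (M N : Matrix (Fin n) (Fin n) K) (s t : ℕ) :
    natEntry (M + N) s t = natEntry M s t + natEntry N s t := by
  unfold natEntry; split_ifs <;> simp

lemma natSingle_eq_single {i j : ℕ} (hi : i < n) (hj : j < n) :
    (natSingle i j : Matrix (Fin n) (Fin n) K) = single ⟨i, hi⟩ ⟨j, hj⟩ 1 :=
  dif_pos ⟨hi, hj⟩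

lemma natSingle_of_le {i j : ℕ} (h : n ≤ i ∨ n ≤ j) :
    (natSingle i j : Matrix (Fin n) (Fin n) K) = 0 :=
  dif_neg (by omega)

lemma natEntry_mul_natSingle (M : Matrix (Fin n) (Fin n) K) {i j : ℕ} (hj : j < n) (s t : ℕ) :
    natEntry (M * natSingle i j) s t = if t = j then natEntry M s i else 0 := by
  by_cases hst : s < n ∧ t < n
  · by_cases hi : i < n
    · rw [natSingle_eq_single hi hj, natEntry_of_lt _ hst.1 hst.2]
      split_ifs with htj
      · subst htj
        rw [mul_single_apply_same, mul_one, natEntry_of_lt]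
      · exact mul_single_apply_of_ne (hbj := by simpa [Fin.ext_iff] using htj) ..
    · rw [natSingle_of_le (by omega), mul_zero, natEntry_zero, natEntry_of_le (by omega),
        ite_self]
  · rw [natEntry_of_le (by omega)]
    split_ifs with h
    · rw [natEntry_of_le (by omega)]
    · rfl

lemma natEntry_natSingle_mul (M : Matrix (Fin n) (Fin n) K) {i j : ℕ} (hi : i < n) (s t : ℕ) :
    natEntry (natSingle i j * M) s t = if s = i then natEntry M j t else 0 := by
  by_cases hst : s < n ∧ t < n
  · by_cases hj : j < n
    · rw [natSingle_eq_single hi hj, natEntry_of_lt _ hst.1 hst.2]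
      split_ifs with hsi
      · subst hsi
        rw [single_mul_apply_same, one_mul, natEntry_of_lt]
      · exact single_mul_apply_of_ne (h := by simpa [Fin.ext_iff] using hsi) ..
    · rw [natSingle_of_le (by omega), zero_mul, natEntry_zero, natEntry_of_le (by omega),
        ite_self]
  · rw [natEntry_of_le (by omega)]
    split_ifs with h
    · rw [natEntry_of_le (by omega)]
    · rfl

lemma natSingle_mul_natSingle_of_ne {i j k l : ℕ} (h : j ≠ k) :
    (natSingle i j * natSingle k l : Matrix (Fin n) (Fin n) K) = 0 := by
  unfold natSingle
  split_ifs <;> simp_all [Fin.ext_iff]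

lemma natSingle_mul_natSingle {i j l : ℕ} (h : j < i) :
    (natSingle i j * natSingle j l : Matrix (Fin n) (Fin n) K) = natSingle i l := by
  unfold natSingle
  split_ifs <;> first | omega | simp

def IsCornerSupported (M : Matrix (Fin n) (Fin n) K) : Prop :=
  ∀ s t, s ≠ n - 1 ∨ t ≠ 0 → natEntry M s t = 0

lemma isCornerSupported_zero : IsCornerSupported (0 : Matrix (Fin n) (Fin n) K) :=
  fun s t _ => natEntry_zero s t

lemma IsCornerSupported.eq_single (hn : 0 < n) {M : Matrix (Fin n) (Fin n) K}
    (h : IsCornerSupported M) :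
    M = single ⟨n - 1, by omega⟩ ⟨0, hn⟩ (natEntry M (n - 1) 0) := by
  ext ⟨s, hs⟩ ⟨t, ht⟩
  rw [← natEntry_of_lt M hs ht]
  by_cases hst : s = n - 1 ∧ t = 0
  · obtain ⟨rfl, rfl⟩ := hst
    rw [single_apply_same]
  · rw [h _ _ (by tauto), single_apply_of_ne]
    simp only [Fin.mk.injEq]
    tauto

lemma eq_zero_of_natEntry_eq_zero {M : Matrix (Fin n) (Fin n) K}
    (h : ∀ s t, natEntry M s t = 0) : M = 0 := by
  ext ⟨s, hs⟩ ⟨t, ht⟩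
  rw [← natEntry_of_lt M hs ht, h, Matrix.zero_apply]

end NatIndexed

def JordanLeibniz {A : Type*} [NonUnitalNonAssocRing A] (Δ : A → A) : Prop :=
  ∀ a b : A, Δ (a * b + b * a) = Δ a * b + b * Δ a + a * Δ b + Δ b * a

lemma JordanLeibniz.map_zero {A : Type*} [NonUnitalNonAssocRing A] {Δ : A → A}
    (hjord : JordanLeibniz Δ) : Δ 0 = 0 := by
  simpa using hjord 0 0

section LowerUnit

variable {n : ℕ} {K : Type} [Ring K] {J : TwoSidedIdeal K}

lemma natSingle_mem_Rset {i j : ℕ} (h : j < i) :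
    (natSingle i j : Matrix (Fin n) (Fin n) K) ∈ Rset n K J := by
  by_cases hi : i < n
  · rw [natSingle_eq_single hi (by omega)]
    exact stdBasis_mem_lower (Fin.mk_lt_mk.mpr h) 1
  · rw [natSingle_of_le (by omega)]
    exact zero_mem _

def lowerUnit (i j : ℕ) (h : j < i) : Rset n K J :=
  ⟨natSingle i j, natSingle_mem_Rset h⟩

abbrev subUnit (c : ℕ) : Rset n K J :=
  lowerUnit (c + 1) c c.lt_add_one

lemma mk_single_eq_lowerUnit {i j : Fin n} (h : j < i) :
    (⟨single i j 1, stdBasis_mem_lower h 1⟩ : Rset n K J) = lowerUnit i j h :=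
  Subtype.ext (natSingle_eq_single i.isLt j.isLt).symm

lemma lowerUnit_eq_subUnit {i j : ℕ} (h : j < i) (hij : i = j + 1) :
    (lowerUnit i j h : Rset n K J) = subUnit j := by
  subst hij; rfl

lemma lowerUnit_mul_lowerUnit_of_ne {i j k l : ℕ} (hji : j < i) (hlk : l < k) (h : j ≠ k) :
    (lowerUnit i j hji * lowerUnit k l hlk : Rset n K J) = 0 :=
  Subtype.ext (natSingle_mul_natSingle_of_ne h)

lemma lowerUnit_mul_lowerUnit {i j l : ℕ} (hji : j < i) (hlj : l < j) :
    (lowerUnit i j hji * lowerUnit j l hlj : Rset n K J) = lowerUnit i l (hlj.trans hji) :=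
  Subtype.ext (natSingle_mul_natSingle hji)

variable (Δ : Rset n K J → Rset n K J)

lemma natEntry_map_jordan_lowerUnit (hjord : JordanLeibniz Δ)
    {i j k l : ℕ} (hji : j < i) (hlk : l < k) (hi : i < n) (hk : k < n) (s t : ℕ) :
    natEntry
        (Δ (lowerUnit i j hji * lowerUnit k l hlk + lowerUnit k l hlk * lowerUnit i j hji)).val
        s t =
      (if t = l then natEntry (Δ (lowerUnit i j hji)).val s k else 0)
      + (if s = k then natEntry (Δ (lowerUnit i j hji)).val l t else 0)
      + (if s = i then natEntry (Δ (lowerUnit k l hlk)).val j t else 0)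
      + (if t = j then natEntry (Δ (lowerUnit k l hlk)).val s i else 0) := by
  rw [hjord]
  simp only [NonUnitalSubring.val_add, NonUnitalSubring.val_mul, lowerUnit, natEntry_add,
    natEntry_mul_natSingle _ (hlk.trans hk), natEntry_mul_natSingle _ (hji.trans hi),
    natEntry_natSingle_mul _ hi, natEntry_natSingle_mul _ hk]

lemma natEntry_map_jordan_lowerUnit_of_ne (hjord : JordanLeibniz Δ)
    {i j k l : ℕ} (hji : j < i) (hlk : l < k) (hi : i < n) (hk : k < n)
    (hjk : j ≠ k) (hli : l ≠ i) (s t : ℕ) :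
      (if t = l then natEntry (Δ (lowerUnit i j hji)).val s k else 0)
      + (if s = k then natEntry (Δ (lowerUnit i j hji)).val l t else 0)
      + (if s = i then natEntry (Δ (lowerUnit k l hlk)).val j t else 0)
      + (if t = j then natEntry (Δ (lowerUnit k l hlk)).val s i else 0) = 0 := by
  rw [← natEntry_map_jordan_lowerUnit Δ hjord hji hlk hi hk,
    lowerUnit_mul_lowerUnit_of_ne _ _ hjk, lowerUnit_mul_lowerUnit_of_ne _ _ hli, add_zero,
    hjord.map_zero]
  exact natEntry_zero s t

end LowerUnit

section Subdiagonal

variable {n : ℕ} {K : Type} [Ring K] {J : TwoSidedIdeal K} (Δ : Rset n K J → Rset n K J)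

lemma natEntry_map_subUnit_self (hjord : JordanLeibniz Δ) (htf : ∀ a : K, a + a = 0 → a = 0)
    {c : ℕ} (hc : c + 1 < n) (s t : ℕ) :
    (if t = c then natEntry (Δ (subUnit c)).val s (c + 1) else 0)
      + (if s = c + 1 then natEntry (Δ (subUnit c)).val c t else 0) = 0 := by
  apply htf
  convert natEntry_map_jordan_lowerUnit_of_ne Δ hjord c.lt_add_one c.lt_add_one hc hc
    (by omega) (by omega) s t using 1
  abel

lemma natEntry_map_subUnit_col_add_one (hjord : JordanLeibniz Δ)
    (htf : ∀ a : K, a + a = 0 → a = 0)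
    (hcol : ∀ c, c + 1 < n → ∀ s, natEntry (Δ (subUnit c)).val s c = 0)
    {c : ℕ} (hc : c + 1 < n) (s : ℕ) : natEntry (Δ (subUnit c)).val s (c + 1) = 0 := by
  have h := natEntry_map_subUnit_self Δ hjord htf hc s c
  by_cases hs : s = c + 1
  · subst hs
    simpa [hcol c hc] using h
  · simpa [hs] using h

lemma natEntry_map_subUnit_row (hjord : JordanLeibniz Δ) (htf : ∀ a : K, a + a = 0 → a = 0)
    (hcol : ∀ c, c + 1 < n → ∀ s, natEntry (Δ (subUnit c)).val s c = 0)
    {c : ℕ} (hc : c + 1 < n) (t : ℕ) : natEntry (Δ (subUnit c)).val c t = 0 := by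
  by_cases ht : t = c
  · exact ht ▸ hcol c hc c
  · simpa [ht] using natEntry_map_subUnit_self Δ hjord htf hc (c + 1) t

lemma natEntry_map_subUnit_col_of_far (hjord : JordanLeibniz Δ) {b c : ℕ} (hc : c + 1 < n)
    (hb : b + 1 < n) (hcb : c + 2 ≤ b ∨ b + 2 ≤ c) {s : ℕ} (hsb : s ≠ b + 1)
    (hsc : s ≠ c + 1) :
    natEntry (Δ (subUnit c)).val s (b + 1) = 0 := by
  simpa [hsb, hsc, show b ≠ c by omega] using natEntry_map_jordan_lowerUnit_of_ne Δ hjord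
    c.lt_add_one b.lt_add_one hc hb (by omega) (by omega) s b

lemma natEntry_map_subUnit_row_of_far (hjord : JordanLeibniz Δ)
    (hcol : ∀ c, c + 1 < n → ∀ s, natEntry (Δ (subUnit c)).val s c = 0)
    {b c : ℕ} (hc : c + 1 < n) (hb : b + 1 < n) (hcb : c + 2 ≤ b ∨ b + 2 ≤ c)
    {t : ℕ} (htb : t ≠ b) : natEntry (Δ (subUnit c)).val b t = 0 := by
  by_cases htc : t = c
  · exact htc ▸ hcol c hc b
  · simpa [htb, htc, show b ≠ c by omega] using natEntry_map_jordan_lowerUnit_of_ne Δ hjord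
      c.lt_add_one b.lt_add_one hc hb (by omega) (by omega) (b + 1) t

lemma natEntry_map_subUnit_row_add_one_of_far (hjord : JordanLeibniz Δ)
    (hcol : ∀ c, c + 1 < n → ∀ s, natEntry (Δ (subUnit c)).val s c = 0)
    {b c : ℕ} (hc : c + 1 < n) (hb : b + 1 < n) (hcb : c + 2 ≤ b ∨ b + 2 ≤ c) :
    natEntry (Δ (subUnit c)).val (c + 1) (b + 1) = 0 := by
  simpa [show b ≠ c by omega, show c ≠ b by omega, hcol b hb c] using
    natEntry_map_jordan_lowerUnit_of_ne Δ hjord c.lt_add_one b.lt_add_one hc hb (by omega)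
      (by omega) (c + 1) b

lemma natEntry_map_subUnit_diag_of_far (hjord : JordanLeibniz Δ) {b c : ℕ} (hc : c + 1 < n)
    (hb : b + 1 < n) (hcb : c + 2 ≤ b ∨ b + 2 ≤ c) :
    natEntry (Δ (subUnit c)).val (b + 1) (b + 1) + natEntry (Δ (subUnit c)).val b b = 0 := by
  simpa [show b ≠ c by omega] using natEntry_map_jordan_lowerUnit_of_ne Δ hjord
    c.lt_add_one b.lt_add_one hc hb (by omega) (by omega) (b + 1) b

lemma natEntry_map_lowerUnit_two (hjord : JordanLeibniz Δ) {c : ℕ} (hc : c + 2 < n) (s t : ℕ) :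
    natEntry (Δ (lowerUnit (c + 2) c (by omega))).val s t =
      (if t = c + 1 then natEntry (Δ (subUnit c)).val s (c + 2) else 0)
      + (if s = c + 2 then natEntry (Δ (subUnit c)).val (c + 1) t else 0)
      + (if s = c + 1 then natEntry (Δ (subUnit (c + 1))).val c t else 0)
      + (if t = c then natEntry (Δ (subUnit (c + 1))).val s (c + 1) else 0) := by
  have h := natEntry_map_jordan_lowerUnit Δ hjord c.lt_add_one (c + 1).lt_add_one (by omega) hc s t
  rwa [lowerUnit_mul_lowerUnit_of_ne _ _ (by omega), zero_add, lowerUnit_mul_lowerUnit] at h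

lemma natEntry_map_subUnit_col_add_two (hjord : JordanLeibniz Δ)
    (htf : ∀ a : K, a + a = 0 → a = 0)
    (hcol : ∀ c, c + 1 < n → ∀ s, natEntry (Δ (subUnit c)).val s c = 0)
    {c : ℕ} (hc : c + 2 < n) (s : ℕ) : natEntry (Δ (subUnit c)).val s (c + 2) = 0 := by
  have h := natEntry_map_jordan_lowerUnit_of_ne Δ hjord c.lt_add_one (by omega : c < c + 2)
    (by omega) hc (by omega) (by omega) s c
  have h1 : natEntry (Δ (subUnit c)).val (c + 1) (c + 1) = 0 :=
    natEntry_map_subUnit_col_add_one Δ hjord htf hcol (by omega) _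
  simp [natEntry_map_lowerUnit_two Δ hjord hc, hcol c (by omega), hcol (c + 1) hc, h1] at h
  exact htf _ h

lemma natEntry_map_subUnit_row_pred (hjord : JordanLeibniz Δ)
    (htf : ∀ a : K, a + a = 0 → a = 0)
    (hcol : ∀ c, c + 1 < n → ∀ s, natEntry (Δ (subUnit c)).val s c = 0)
    {c : ℕ} (hc : c + 2 < n) (t : ℕ) : natEntry (Δ (subUnit (c + 1))).val c t = 0 := by
  have h := natEntry_map_jordan_lowerUnit_of_ne Δ hjord (c + 1).lt_add_one (by omega : c < c + 2)
    hc hc (by omega) (by omega) (c + 2) t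
  have h1 : natEntry (Δ (subUnit (c + 1))).val (c + 2) (c + 2) = 0 :=
    natEntry_map_subUnit_col_add_one Δ hjord htf hcol hc _
  have h2 : natEntry (Δ (subUnit (c + 1))).val (c + 1) (c + 1) = 0 :=
    natEntry_map_subUnit_row Δ hjord htf hcol hc _
  simp [natEntry_map_lowerUnit_two Δ hjord hc, h1, h2, show c + 1 + 1 ≠ c by omega,
    natEntry_map_subUnit_col_add_two Δ hjord htf hcol hc] at h
  exact htf _ h

lemma natEntry_map_subUnit_diag_of_le (hjord : JordanLeibniz Δ)
    (htf : ∀ a : K, a + a = 0 → a = 0)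
    (hcol : ∀ c, c + 1 < n → ∀ s, natEntry (Δ (subUnit c)).val s c = 0)
    {c : ℕ} (hc : c + 1 < n) {s : ℕ} (hs : c + 2 ≤ s) :
    natEntry (Δ (subUnit c)).val s s = 0 := by
  induction s, hs using Nat.le_induction with
  | base =>
    by_cases h : c + 2 < n
    · exact natEntry_map_subUnit_col_add_two Δ hjord htf hcol h _
    · exact natEntry_of_le (by omega)
  | succ s hs ih =>
    by_cases h : s + 1 < n
    · simpa [ih] using natEntry_map_subUnit_diag_of_far Δ hjord hc h (Or.inl hs)
    · exact natEntry_of_le (by omega)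

lemma natEntry_map_subUnit_diag_of_lt (hjord : JordanLeibniz Δ)
    (htf : ∀ a : K, a + a = 0 → a = 0)
    (hcol : ∀ c, c + 1 < n → ∀ s, natEntry (Δ (subUnit c)).val s c = 0)
    {c : ℕ} (hc : c + 1 < n) {s : ℕ} (hs : s < c) :
    natEntry (Δ (subUnit c)).val s s = 0 := by
  obtain ⟨d, rfl⟩ := Nat.exists_eq_add_of_lt hs
  induction d generalizing s with
  | zero => exact natEntry_map_subUnit_row_pred Δ hjord htf hcol hc s
  | succ d ih =>
    have h1 : natEntry (Δ (subUnit (s + (d + 1) + 1))).val (s + 1) (s + 1) = 0 := by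
      have := ih (s := s + 1) (by omega) (by omega)
      rwa [show s + 1 + d + 1 = s + (d + 1) + 1 by omega] at this
    simpa [h1] using natEntry_map_subUnit_diag_of_far Δ hjord hc (b := s) (by omega)
      (Or.inr (by omega))

lemma natEntry_map_subUnit_diag (hjord : JordanLeibniz Δ)
    (htf : ∀ a : K, a + a = 0 → a = 0)
    (hcol : ∀ c, c + 1 < n → ∀ s, natEntry (Δ (subUnit c)).val s c = 0)
    {c : ℕ} (hc : c + 1 < n) (s : ℕ) : natEntry (Δ (subUnit c)).val s s = 0 := by
  rcases lt_or_ge s c with hs | hs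
  · exact natEntry_map_subUnit_diag_of_lt Δ hjord htf hcol hc hs
  obtain rfl | rfl | hs := show s = c ∨ s = c + 1 ∨ c + 2 ≤ s by omega
  · exact hcol s hc s
  · exact natEntry_map_subUnit_col_add_one Δ hjord htf hcol hc _
  · exact natEntry_map_subUnit_diag_of_le Δ hjord htf hcol hc hs

lemma isCornerSupported_map_subUnit (hjord : JordanLeibniz Δ)
    (htf : ∀ a : K, a + a = 0 → a = 0)
    (hcol : ∀ c, c + 1 < n → ∀ s, natEntry (Δ (subUnit c)).val s c = 0)
    (hent : ∀ c, c + 1 < n → natEntry (Δ (subUnit c)).val (c + 1) 0 = 0)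
    {c : ℕ} (hc : c + 1 < n) : IsCornerSupported (Δ (subUnit c)).val := by
  intro s t hst
  by_cases hn : n ≤ s ∨ n ≤ t
  · exact natEntry_of_le hn
  by_cases htc : t = c
  · rw [htc]; exact hcol c hc s
  by_cases htc1 : t = c + 1
  · rw [htc1]; exact natEntry_map_subUnit_col_add_one Δ hjord htf hcol hc s
  by_cases htc2 : t = c + 2
  · rw [htc2]; exact natEntry_map_subUnit_col_add_two Δ hjord htf hcol (by omega) s
  by_cases hsc : s = c
  · rw [hsc]; exact natEntry_map_subUnit_row Δ hjord htf hcol hc t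
  by_cases hsc' : s + 1 = c
  · subst hsc'; exact natEntry_map_subUnit_row_pred Δ hjord htf hcol hc t
  by_cases hts : t = s
  · rw [hts]; exact natEntry_map_subUnit_diag Δ hjord htf hcol hc s
  by_cases hsc1 : s = c + 1
  · subst hsc1
    obtain _ | b := t
    · exact hent c hc
    · exact natEntry_map_subUnit_row_add_one_of_far Δ hjord hcol hc (by omega) (by omega)
  by_cases hs : s + 1 < n
  · exact natEntry_map_subUnit_row_of_far Δ hjord hcol hc hs (by omega) hts
  obtain ⟨b, rfl⟩ : ∃ b, t = b + 1 := ⟨t - 1, by omega⟩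
  exact natEntry_map_subUnit_col_of_far Δ hjord hc (by omega) (by omega) (Ne.symm hts) hsc1

end Subdiagonal

section FarBelowDiagonal

variable {n : ℕ} {K : Type} [Ring K] {J : TwoSidedIdeal K} (Δ : Rset n K J → Rset n K J)

lemma map_lowerUnit_succ_eq_zero (hjord : JordanLeibniz Δ) {r c : ℕ} (hcr : c < r)
    (hr : r + 1 < n) (hX : IsCornerSupported (Δ (subUnit r)).val)
    (hY : IsCornerSupported (Δ (lowerUnit r c hcr)).val) :
    Δ (lowerUnit (r + 1) c (hcr.trans r.lt_add_one)) = 0 := by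
  have hprod : subUnit r * lowerUnit r c hcr + lowerUnit r c hcr * subUnit r
      = (lowerUnit (r + 1) c (hcr.trans r.lt_add_one) : Rset n K J) := by
    rw [lowerUnit_mul_lowerUnit, lowerUnit_mul_lowerUnit_of_ne _ _ (by omega), add_zero]
  refine hprod ▸ Subtype.ext (eq_zero_of_natEntry_eq_zero fun s t => ?_)
  rw [natEntry_map_jordan_lowerUnit Δ hjord _ _ hr (by omega)]
  simp [hX _ r (.inr (by omega)), hX c _ (.inl (by omega)), hY r _ (.inl (by omega)),
    hY _ (r + 1) (.inr (by omega))]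

lemma map_lowerUnit_eq_zero (hjord : JordanLeibniz Δ)
    (htf : ∀ a : K, a + a = 0 → a = 0)
    (hcol : ∀ c, c + 1 < n → ∀ s, natEntry (Δ (subUnit c)).val s c = 0)
    (hent : ∀ c, c + 1 < n → natEntry (Δ (subUnit c)).val (c + 1) 0 = 0)
    {r c : ℕ} (hcr : c + 1 < r) (hr : r < n) : Δ (lowerUnit r c (by omega)) = 0 := by
  have hcorner : ∀ m (hm : c < m), m < n → IsCornerSupported (Δ (lowerUnit m c hm)).val := by
    intro m hm
    induction m, hm using Nat.le_induction with
    | base => exact isCornerSupported_map_subUnit Δ hjord htf hcol hent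
    | succ m hm ih =>
      intro hm'
      rw [map_lowerUnit_succ_eq_zero Δ hjord hm hm'
        (isCornerSupported_map_subUnit Δ hjord htf hcol hent hm') (ih (by omega))]
      exact isCornerSupported_zero
  obtain ⟨r, rfl⟩ : ∃ r', r = r' + 1 := ⟨r - 1, by omega⟩
  exact map_lowerUnit_succ_eq_zero Δ hjord (by omega) hr
    (isCornerSupported_map_subUnit Δ hjord htf hcol hent hr) (hcorner r _ (by omega))

end FarBelowDiagonal

/-- if the `i`-th column and the `(i+1,1)` entry of each `Δ(e_{i+1,i})`
vanish, then `Δ(e_{2,1}) = 0`, `Δ(e_{n,n-1}) = 0`,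
`Δ(e_{i+1,i}) = Δ^{i+1,i}_{n,1}(1) e_{n,1}` for `1 < i < n-1`, and `Δ(e_{i,j}) = 0`
whenever `i - j > 1`. -/
theorem images_of_units (n : ℕ) (hn : 4 ≤ n) (K : Type) [Ring K]
    (htf : ∀ a : K, a + a = 0 → a = 0) (J : TwoSidedIdeal K)
    (Δ : ↥(Rset n K J) → ↥(Rset n K J))
    (hjord : ∀ a b : ↥(Rset n K J),
      Δ (a * b + b * a) = Δ a * b + b * Δ a + a * Δ b + Δ b * a)
    (hcol : ∀ (c : Fin n) (hc : (c : ℕ) + 1 < n), ∀ s : Fin n,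
      (↑(Δ ⟨Matrix.single (⟨(c : ℕ) + 1, hc⟩ : Fin n) c (1 : K),
          stdBasis_mem_lower (by simp only [Fin.lt_def]; omega) 1⟩) :
        Matrix (Fin n) (Fin n) K) s c = 0)
    (hent : ∀ (c : Fin n) (hc : (c : ℕ) + 1 < n),
      (↑(Δ ⟨Matrix.single (⟨(c : ℕ) + 1, hc⟩ : Fin n) c (1 : K),
          stdBasis_mem_lower (by simp only [Fin.lt_def]; omega) 1⟩) :
        Matrix (Fin n) (Fin n) K) (⟨(c : ℕ) + 1, hc⟩ : Fin n) ⟨0, by omega⟩ = 0) :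
    (Δ ⟨Matrix.single (⟨1, by omega⟩ : Fin n) ⟨0, by omega⟩ (1 : K),
        stdBasis_mem_lower (by simp only [Fin.lt_def]; omega) 1⟩ = 0) ∧
    (Δ ⟨Matrix.single (⟨n - 1, by omega⟩ : Fin n) ⟨n - 2, by omega⟩ (1 : K),
        stdBasis_mem_lower (by simp only [Fin.lt_def]; omega) 1⟩ = 0) ∧
    (∀ (c : Fin n) (hc1 : 1 ≤ (c : ℕ)) (hc2 : (c : ℕ) < n - 2),
      (↑(Δ ⟨Matrix.single (⟨(c : ℕ) + 1, by omega⟩ : Fin n) c (1 : K),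
          stdBasis_mem_lower (by simp only [Fin.lt_def]; omega) 1⟩) :
        Matrix (Fin n) (Fin n) K) =
        Matrix.single (⟨n - 1, by omega⟩ : Fin n) ⟨0, by omega⟩
          ((↑(Δ ⟨Matrix.single (⟨(c : ℕ) + 1, by omega⟩ : Fin n) c (1 : K),
              stdBasis_mem_lower (by simp only [Fin.lt_def]; omega) 1⟩) :
            Matrix (Fin n) (Fin n) K) ⟨n - 1, by omega⟩ ⟨0, by omega⟩)) ∧
    (∀ (r c : Fin n) (hrc : (c : ℕ) + 1 < (r : ℕ)),
      Δ ⟨Matrix.single r c (1 : K),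
          stdBasis_mem_lower (by simp only [Fin.lt_def]; omega) 1⟩ = 0) := by
  have hcol' : ∀ c, c + 1 < n → ∀ s, natEntry (Δ (subUnit c)).val s c = 0 := by
    intro c hc s
    by_cases hs : s < n
    · rw [natEntry_of_lt _ hs (by omega)]
      have := hcol ⟨c, by omega⟩ hc ⟨s, hs⟩
      rwa [mk_single_eq_lowerUnit] at this
    · exact natEntry_of_le (.inl (by omega))
  have hent' : ∀ c, c + 1 < n → natEntry (Δ (subUnit c)).val (c + 1) 0 = 0 := by
    intro c hc
    rw [natEntry_of_lt _ hc (by omega)]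
    have := hent ⟨c, by omega⟩ hc
    rwa [mk_single_eq_lowerUnit] at this
  have hcorner : ∀ c, c + 1 < n → (Δ (subUnit c)).val
      = single ⟨n - 1, by omega⟩ ⟨0, by omega⟩ (natEntry (Δ (subUnit c)).val (n - 1) 0) :=
    fun c hc => (isCornerSupported_map_subUnit Δ hjord htf hcol' hent' hc).eq_single (by omega)
  refine ⟨?_, ?_, fun c _ _ => ?_, fun r c hrc => ?_⟩
  · rw [mk_single_eq_lowerUnit (Fin.lt_def.mpr zero_lt_one)]
    exact Subtype.ext
      ((hcorner 0 (by omega)).trans (by rw [hcol' 0 (by omega), single_zero]; rfl))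
  · have hlast := hent' (n - 2) (by omega)
    rw [show n - 2 + 1 = n - 1 by omega] at hlast
    rw [mk_single_eq_lowerUnit (Fin.lt_def.mpr (by simp only; omega)),
      lowerUnit_eq_subUnit _ (by omega : n - 1 = n - 2 + 1)]
    exact Subtype.ext ((hcorner _ (by omega)).trans (by rw [hlast, single_zero]; rfl))
  · rw [mk_single_eq_lowerUnit (Fin.lt_def.mpr (by simp only; omega))]
    exact (hcorner c (by omega)).trans (congrArg _ (natEntry_of_lt _ _ _))
  · rw [mk_single_eq_lowerUnit (Fin.lt_def.mpr (by omega))]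
    exact map_lowerUnit_eq_zero Δ hjord htf hcol' hent' hrc r.isLt
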